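/- arXiv:2008.00242 — 4 statements merged into one kernel-verified Lean document; each statement's English description precedes it below -/
import Mathlib

section
/- Fix y ∈ ℝⁿ, σ² > 0, and an n × (n+1) real matrix K. The function f₁(λ₀⁻¹, …, λₙ⁻¹) = exp(-½ yᵀ(σ² I + K D⁻¹ Kᵀ)⁻¹ y), where D = diag(λ₀, …, λₙ), is nondecreasing in each coordinate λᵢ⁻¹: if λᵢ⁻¹ ≤ μᵢ⁻¹ for all i, then f₁(λ₀⁻¹, …, λₙ⁻¹) ≤ f₁(μ₀⁻¹, …, μₙ⁻¹). -/
/-!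
Writing `Σ(d) = σ² I + K diag(d) Kᵀ` with `d = (λ₀⁻¹, …, λₙ⁻¹)`, the map `d ↦ Σ(d)` is monotone for
the Loewner order, matrix inversion is antitone on positive definite matrices, so
`yᵀ Σ(d)⁻¹ y` decreases in `d` and `exp (-½ yᵀ Σ(d)⁻¹ y)` increases.
-/

open Matrix
open scoped MatrixOrder ComplexOrder

namespace Matrix

variable {ι κ : Type*}

lemma diagonal_le_diagonal {𝕜 : Type*} [RCLike 𝕜] [DecidableEq ι] {d e : ι → 𝕜} (h : d ≤ e) :
    diagonal d ≤ diagonal e := by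
  rw [le_iff, diagonal_sub, posSemidef_diagonal_iff]
  exact fun i => sub_nonneg.mpr (h i)

lemma inv_diagonal_of_ne_zero {K : Type*} [Field K] [Fintype ι] [DecidableEq ι] {v : ι → K}
    (hv : ∀ i, v i ≠ 0) : (diagonal v)⁻¹ = diagonal v⁻¹ := by
  refine inv_eq_right_inv ?_
  rw [diagonal_mul_diagonal, ← diagonal_one]
  exact congrArg diagonal (funext fun i => mul_inv_cancel₀ (hv i))

variable [Fintype ι]

lemma mul_mul_conjTranspose_le_mul_mul_conjTranspose {𝕜 : Type*} [RCLike 𝕜] [Finite κ]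
    {A B : Matrix ι ι 𝕜} (hAB : A ≤ B) (K : Matrix κ ι 𝕜) : K * A * Kᴴ ≤ K * B * Kᴴ := by
  rw [le_iff, ← Matrix.sub_mul, ← Matrix.mul_sub]
  exact (le_iff.mp hAB).mul_mul_conjTranspose_same K

lemma dotProduct_mulVec_le_of_le {A B : Matrix ι ι ℝ} (hAB : A ≤ B) (x : ι → ℝ) :
    x ⬝ᵥ (A *ᵥ x) ≤ x ⬝ᵥ (B *ᵥ x) := by
  simpa [sub_mulVec, dotProduct_sub, sub_nonneg] using
    (le_iff.mp hAB).dotProduct_mulVec_nonneg x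

/-- With `z = B⁻¹ y` and `w = A⁻¹ y`, expanding `0 ≤ (z - w)ᵀ A (z - w)` and bounding
`zᵀ A z ≤ zᵀ B z = yᵀ z` gives `yᵀ z ≤ yᵀ w`. -/
lemma PosDef.dotProduct_inv_mulVec_le [DecidableEq ι] {A B : Matrix ι ι ℝ} (hA : A.PosDef)
    (hAB : A ≤ B) (y : ι → ℝ) : y ⬝ᵥ (B⁻¹ *ᵥ y) ≤ y ⬝ᵥ (A⁻¹ *ᵥ y) := by
  have hB : B.PosDef := by simpa using hA.add_posSemidef (le_iff.mp hAB)
  have mulVec_inv_mulVec {M : Matrix ι ι ℝ} (hM : M.PosDef) : M *ᵥ (M⁻¹ *ᵥ y) = y := by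
    rw [mulVec_mulVec, mul_nonsing_inv M ((isUnit_iff_isUnit_det M).mp hM.isUnit), one_mulVec]
  set z := B⁻¹ *ᵥ y
  set w := A⁻¹ *ᵥ y
  have hA_symm : Aᵀ = A := by
    simpa [conjTranspose_eq_transpose_of_trivial] using hA.isHermitian.eq
  have hwAz : w ⬝ᵥ (A *ᵥ z) = y ⬝ᵥ z := by
    rw [dotProduct_mulVec, ← mulVec_transpose, hA_symm, mulVec_inv_mulVec hA]
  have expand : (z - w) ⬝ᵥ (A *ᵥ (z - w)) = z ⬝ᵥ (A *ᵥ z) - 2 * (y ⬝ᵥ z) + y ⬝ᵥ w := by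
    rw [mulVec_sub, sub_dotProduct, dotProduct_sub, dotProduct_sub, hwAz, mulVec_inv_mulVec hA,
      dotProduct_comm z y, dotProduct_comm w y]
    ring
  have quad_nonneg : 0 ≤ (z - w) ⬝ᵥ (A *ᵥ (z - w)) := by
    simpa using hA.posSemidef.dotProduct_mulVec_nonneg (z - w)
  have hzBz : z ⬝ᵥ (B *ᵥ z) = y ⬝ᵥ z := by rw [mulVec_inv_mulVec hB, dotProduct_comm]
  linarith [dotProduct_mulVec_le_of_le hAB z]

end Matrix

theorem stmt10 {n : ℕ} (y : Fin n → ℝ) (σ2 : ℝ) (hσ : 0 < σ2)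
    (K : Matrix (Fin n) (Fin (n+1)) ℝ) (l m : Fin (n+1) → ℝ)
    (hl : ∀ i, 0 < l i) (hm : ∀ i, 0 < m i)
    (h : ∀ i, (l i)⁻¹ ≤ (m i)⁻¹) :
    Real.exp (-(1/2) * (y ⬝ᵥ
      ((σ2 • (1 : Matrix (Fin n) (Fin n) ℝ) + K * (Matrix.diagonal l)⁻¹ * Kᵀ)⁻¹ *ᵥ y))) ≤
    Real.exp (-(1/2) * (y ⬝ᵥ
      ((σ2 • (1 : Matrix (Fin n) (Fin n) ℝ) + K * (Matrix.diagonal m)⁻¹ * Kᵀ)⁻¹ *ᵥ y))) := by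
  rw [inv_diagonal_of_ne_zero fun i => (hl i).ne', inv_diagonal_of_ne_zero fun i => (hm i).ne',
    ← conjTranspose_eq_transpose_of_trivial]
  have hσI : (σ2 • (1 : Matrix (Fin n) (Fin n) ℝ)).PosDef := by
    rw [smul_one_eq_diagonal]
    exact PosDef.diagonal fun _ => hσ
  have hKlK : (K * diagonal l⁻¹ * Kᴴ).PosSemidef :=
    (PosSemidef.diagonal fun i => (inv_pos.mpr (hl i)).le).mul_mul_conjTranspose_same K
  have hKK : K * diagonal l⁻¹ * Kᴴ ≤ K * diagonal m⁻¹ * Kᴴ :=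
    mul_mul_conjTranspose_le_mul_mul_conjTranspose (diagonal_le_diagonal h) K
  have hAB : σ2 • (1 : Matrix (Fin n) (Fin n) ℝ) + K * diagonal l⁻¹ * Kᴴ ≤
      σ2 • 1 + K * diagonal m⁻¹ * Kᴴ := by
    gcongr
  have key := (hσI.add_posSemidef hKlK).dotProduct_inv_mulVec_le hAB y
  exact Real.exp_le_exp.mpr (by linarith)
end

section
/- Fix y ∈ ℝⁿ, σ² > 0, an n × (n+1) matrix K, and let P_K = K (KᵀK)⁺ Kᵀ be the orthogonal projection onto the column space of K (using the Moore–Penrose pseudoinverse). For any positive λ₀, …, λₙ with D = diag(λ₀, …, λₙ): exp(-yᵀy/(2σ²)) ≤ exp(-½ yᵀ(σ² I + K D⁻¹ Kᵀ)⁻¹ y) ≤ exp(-yᵀ(I - P_K)y/(2σ²)). -/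
/-!
Write `M = σ² I + K D⁻¹ Kᵀ` and `a = yᵀ M⁻¹ y`. Since `M - σ² I` is positive semidefinite,
Cauchy–Schwarz applied to `u = M⁻¹ y` gives `a² = (yᵀu)² ≤ |y|² |u|² ≤ |y|² a / σ²`, i.e.
`σ² a ≤ |y|²`. For the other bound, `z = (I - P_K) y` is orthogonal to the columns of `K`, so it
is an eigenvector `M z = σ² z`; moreover `yᵀ z = |z|² = yᵀ (I - P_K) y`. Cauchy–Schwarz for the
inner product defined by `M` gives `(yᵀ z)² ≤ a · zᵀ M z = σ² a |z|²`, i.e. `yᵀ (I - P_K) y ≤ σ² a`.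
The projector enters only through `Kᵀ P_K = Kᵀ`, which already follows from the single Penrose
condition `KᵀK G KᵀK = KᵀK` for `G = (KᵀK)⁺`.
-/

open Classical Matrix

/-- The Moore–Penrose pseudoinverse of a real matrix, defined via its four
characterizing properties (it exists and is unique for every real matrix). -/
noncomputable def moorePenrose {m n : ℕ} (A : Matrix (Fin m) (Fin n) ℝ) :
    Matrix (Fin n) (Fin m) ℝ :=
  if h : ∃ B : Matrix (Fin n) (Fin m) ℝ,
      A * B * A = A ∧ B * A * B = B ∧ (A * B)ᵀ = A * B ∧ (B * A)ᵀ = B * A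
  then h.choose else 0

namespace Matrix

section PenroseConditions

variable {ι : Type*} [Fintype ι] [DecidableEq ι]

theorem IsHermitian.exists_penrose_conditions {A : Matrix ι ι ℝ} (hA : A.IsHermitian) :
    ∃ B : Matrix ι ι ℝ,
      A * B * A = A ∧ B * A * B = B ∧ (A * B)ᵀ = A * B ∧ (B * A)ᵀ = B * A := by
  have hmul (f g : ℝ → ℝ) : cfc f A * cfc g A = cfc (fun x ↦ f x * g x) A :=
    (cfc_mul f g A (A.finite_spectrum.continuousOn f) (A.finite_spectrum.continuousOn g)).symm
  have htranspose (f : ℝ → ℝ) : (cfc f A)ᵀ = cfc f A := by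
    rw [← conjTranspose_eq_transpose_of_trivial]
    exact (cfc_predicate f A).star_eq
  -- `B = A⁻¹` in the functional calculus, where `0⁻¹ = 0` makes the scalar identities hold at `0`
  rw [← cfc_id' ℝ A (ha := hA.isSelfAdjoint)]
  refine ⟨cfc (fun x : ℝ ↦ x⁻¹) A, ?_, ?_, ?_, ?_⟩ <;> simp only [hmul, htranspose]
  · simp only [mul_inv_mul_cancel]
  · simpa only [inv_inv] using congrArg (cfc · A) (funext fun x : ℝ ↦ mul_inv_mul_cancel x⁻¹)

theorem IsHermitian.mul_moorePenrose_mul_self {m : ℕ} {A : Matrix (Fin m) (Fin m) ℝ}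
    (hA : A.IsHermitian) : A * moorePenrose A * A = A := by
  have h := hA.exists_penrose_conditions
  rw [moorePenrose, dif_pos h]
  exact h.choose_spec.1

end PenroseConditions

section Projection

variable {m n p : Type*} [Fintype m] [Fintype n]
  {K : Matrix m n ℝ} {G : Matrix n n ℝ}

theorem mul_transpose_eq_of_mul_transpose_mul_self_eq {X Y : Matrix p n ℝ}
    (h : X * (Kᵀ * K) = Y * (Kᵀ * K)) : X * Kᵀ = Y * Kᵀ := by
  rw [← sub_eq_zero, ← Matrix.sub_mul] at h ⊢
  simpa only [conjTranspose_eq_transpose_of_trivial] using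
    (mul_conjTranspose_mul_self_eq_zero K (X - Y)).mp h

theorem transpose_mul_projection (hG : Kᵀ * K * G * (Kᵀ * K) = Kᵀ * K) :
    Kᵀ * (K * G * Kᵀ) = Kᵀ := by
  have h := mul_transpose_eq_of_mul_transpose_mul_self_eq (X := Kᵀ * K * G) (Y := 1)
    (by rw [Matrix.one_mul, hG])
  simpa only [Matrix.mul_assoc, Matrix.one_mul] using h

theorem transpose_one_sub_projection_mul_self [DecidableEq m]
    (hG : Kᵀ * K * G * (Kᵀ * K) = Kᵀ * K) :
    (1 - K * G * Kᵀ)ᵀ * (1 - K * G * Kᵀ) = 1 - K * G * Kᵀ := by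
  have hP : (K * G * Kᵀ)ᵀ * (K * G * Kᵀ) = (K * G * Kᵀ)ᵀ := by
    rw [transpose_mul, transpose_mul, transpose_transpose, Matrix.mul_assoc, Matrix.mul_assoc Gᵀ,
      transpose_mul_projection hG]
  rw [transpose_sub, transpose_one, Matrix.sub_mul, Matrix.mul_sub, Matrix.mul_sub, hP]
  simp only [Matrix.one_mul, Matrix.mul_one]
  abel

end Projection

section QuadraticForms

variable {ι : Type*} [Fintype ι] {M : Matrix ι ι ℝ}

theorem dotProduct_mulVec_comm_of_isHermitian (hM : M.IsHermitian) (u w : ι → ℝ) :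
    u ⬝ᵥ (M *ᵥ w) = w ⬝ᵥ (M *ᵥ u) := by
  rw [dotProduct_mulVec, ← mulVec_transpose, ← conjTranspose_eq_transpose_of_trivial, hM.eq,
    dotProduct_comm]

theorem PosSemidef.sq_dotProduct_mulVec_le (hM : M.PosSemidef) (u w : ι → ℝ) :
    (u ⬝ᵥ (M *ᵥ w)) ^ 2 ≤ (u ⬝ᵥ (M *ᵥ u)) * (w ⬝ᵥ (M *ᵥ w)) := by
  have hquad (t : ℝ) :
      0 ≤ (w ⬝ᵥ (M *ᵥ w)) * (t * t) + 2 * (u ⬝ᵥ (M *ᵥ w)) * t + u ⬝ᵥ (M *ᵥ u) := by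
    have h := hM.dotProduct_mulVec_nonneg (u + t • w)
    simp only [star_trivial, mulVec_add, mulVec_smul, dotProduct_add, add_dotProduct,
      dotProduct_smul, smul_dotProduct, smul_eq_mul,
      dotProduct_mulVec_comm_of_isHermitian hM.isHermitian w u] at h
    linarith
  have h := discrim_le_zero hquad
  rw [discrim] at h
  linarith

theorem dotProduct_mulVec_self_of_transpose_mul_self_eq {Q : Matrix ι ι ℝ} (hQ : Qᵀ * Q = Q)
    (y : ι → ℝ) : (Q *ᵥ y) ⬝ᵥ (Q *ᵥ y) = y ⬝ᵥ (Q *ᵥ y) := by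
  nth_rw 1 [← vecMul_transpose]
  rw [← dotProduct_mulVec, mulVec_mulVec, hQ]

variable [DecidableEq ι]

theorem mulVec_inv_mulVec_of_isUnit (hM : IsUnit M) (y : ι → ℝ) : M *ᵥ (M⁻¹ *ᵥ y) = y := by
  rw [mulVec_mulVec, mul_nonsing_inv M ((isUnit_iff_isUnit_det M).mp hM), one_mulVec]

theorem PosDef.dotProduct_inv_mulVec_eq (hM : M.PosDef) (y : ι → ℝ) :
    (M⁻¹ *ᵥ y) ⬝ᵥ (M *ᵥ (M⁻¹ *ᵥ y)) = y ⬝ᵥ (M⁻¹ *ᵥ y) := by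
  rw [mulVec_inv_mulVec_of_isUnit hM.isUnit, dotProduct_comm]

theorem PosDef.dotProduct_inv_mulVec_nonneg (hM : M.PosDef) (y : ι → ℝ) :
    0 ≤ y ⬝ᵥ (M⁻¹ *ᵥ y) := by
  simpa using hM.inv.posSemidef.dotProduct_mulVec_nonneg y

theorem PosDef.sq_dotProduct_le (hM : M.PosDef) (y z : ι → ℝ) :
    (y ⬝ᵥ z) ^ 2 ≤ (y ⬝ᵥ (M⁻¹ *ᵥ y)) * (z ⬝ᵥ (M *ᵥ z)) := by
  have h := hM.posSemidef.sq_dotProduct_mulVec_le (M⁻¹ *ᵥ y) z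
  rwa [hM.dotProduct_inv_mulVec_eq, dotProduct_mulVec_comm_of_isHermitian hM.isHermitian,
    mulVec_inv_mulVec_of_isUnit hM.isUnit, dotProduct_comm z] at h

theorem PosDef.mul_dotProduct_inv_mulVec_le {c : ℝ} (hM : M.PosDef) (hc : 0 < c)
    (hMc : (M - c • 1).PosSemidef) (y : ι → ℝ) :
    c * (y ⬝ᵥ (M⁻¹ *ᵥ y)) ≤ y ⬝ᵥ y := by
  set u := M⁻¹ *ᵥ y
  have hcs : (y ⬝ᵥ u) ^ 2 ≤ (y ⬝ᵥ y) * (u ⬝ᵥ u) := by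
    simpa only [inv_one, one_mulVec] using PosDef.one.sq_dotProduct_le y u
  have hu : c * (u ⬝ᵥ u) ≤ u ⬝ᵥ (M *ᵥ u) := by
    have h := hMc.dotProduct_mulVec_nonneg u
    simp only [star_trivial, sub_mulVec, smul_mulVec, one_mulVec, dotProduct_sub,
      dotProduct_smul, smul_eq_mul] at h
    linarith
  rw [hM.dotProduct_inv_mulVec_eq] at hu
  have hyy : 0 ≤ y ⬝ᵥ y := by simpa using dotProduct_self_star_nonneg y
  have key : c * (y ⬝ᵥ u) * (y ⬝ᵥ u) ≤ (y ⬝ᵥ y) * (y ⬝ᵥ u) := by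
    nlinarith [mul_le_mul_of_nonneg_left hu hyy]
  rcases (hM.dotProduct_inv_mulVec_nonneg y).eq_or_lt with h0 | hpos
  · rw [← h0, mul_zero]; exact hyy
  · exact le_of_mul_le_mul_right key hpos

theorem PosDef.le_mul_dotProduct_inv_mulVec {c : ℝ} (hM : M.PosDef) (hc : 0 ≤ c)
    {y z : ι → ℝ} (hz : M *ᵥ z = c • z) (hyz : y ⬝ᵥ z = z ⬝ᵥ z) :
    y ⬝ᵥ z ≤ c * (y ⬝ᵥ (M⁻¹ *ᵥ y)) := by
  have h := hM.sq_dotProduct_le y z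
  rw [hz, dotProduct_smul, smul_eq_mul, ← hyz] at h
  have ha0 := hM.dotProduct_inv_mulVec_nonneg y
  have hq0 : 0 ≤ y ⬝ᵥ z := by simpa [hyz] using dotProduct_self_star_nonneg z
  rcases hq0.eq_or_lt with h0 | hpos
  · rw [← h0]; positivity
  · nlinarith

end QuadraticForms

end Matrix

theorem stmt11 {n : ℕ} (y : Fin n → ℝ) (σ2 : ℝ) (hσ : 0 < σ2)
    (K : Matrix (Fin n) (Fin (n+1)) ℝ) (l : Fin (n+1) → ℝ) (hl : ∀ i, 0 < l i) :
    Real.exp (-(y ⬝ᵥ y) / (2 * σ2)) ≤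
      Real.exp (-(1/2) * (y ⬝ᵥ
        ((σ2 • (1 : Matrix (Fin n) (Fin n) ℝ) + K * (Matrix.diagonal l)⁻¹ * Kᵀ)⁻¹ *ᵥ y))) ∧
    Real.exp (-(1/2) * (y ⬝ᵥ
        ((σ2 • (1 : Matrix (Fin n) (Fin n) ℝ) + K * (Matrix.diagonal l)⁻¹ * Kᵀ)⁻¹ *ᵥ y))) ≤
      Real.exp (-(y ⬝ᵥ (((1 : Matrix (Fin n) (Fin n) ℝ) -
        K * moorePenrose (Kᵀ * K) * Kᵀ) *ᵥ y)) / (2 * σ2)) := by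
  set M := σ2 • (1 : Matrix (Fin n) (Fin n) ℝ) + K * (diagonal l)⁻¹ * Kᵀ
  set z := (1 - K * moorePenrose (Kᵀ * K) * Kᵀ) *ᵥ y
  have hN : (K * (diagonal l)⁻¹ * Kᵀ).PosSemidef := by
    simpa only [conjTranspose_eq_transpose_of_trivial] using
      (posDef_diagonal_iff.mpr hl).inv.posSemidef.mul_mul_conjTranspose_same K
  have hM : M.PosDef := (PosDef.one.smul hσ).add_posSemidef hN
  have hG : Kᵀ * K * moorePenrose (Kᵀ * K) * (Kᵀ * K) = Kᵀ * K := by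
    refine IsHermitian.mul_moorePenrose_mul_self ?_
    simpa only [conjTranspose_eq_transpose_of_trivial] using isHermitian_conjTranspose_mul_self K
  have hz : M *ᵥ z = σ2 • z := by
    have hKz : Kᵀ *ᵥ z = 0 := by
      rw [mulVec_mulVec, Matrix.mul_sub, Matrix.mul_one, transpose_mul_projection hG, sub_self,
        zero_mulVec]
    rw [add_mulVec, smul_mulVec, one_mulVec, ← mulVec_mulVec, hKz, mulVec_zero, add_zero]
  have hyz : y ⬝ᵥ z = z ⬝ᵥ z := (dotProduct_mulVec_self_of_transpose_mul_self_eq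
    (transpose_one_sub_projection_mul_self hG) y).symm
  have hlower := hM.mul_dotProduct_inv_mulVec_le hσ (by rwa [add_sub_cancel_left]) y
  have hupper := hM.le_mul_dotProduct_inv_mulVec hσ.le hz hyz
  constructor <;> rw [Real.exp_le_exp]
  · rw [div_le_iff₀ (by positivity)]
    linarith
  · rw [le_div_iff₀ (by positivity)]
    linarith
end

section
/- Let y ∈ ℝⁿ, σ² > 0, K an n × (n+1) matrix with largest eigenvalue e_max of KᵀK satisfying e_max > 0, and define for λ = (λ₀,…,λₙ) ∈ (0,∞)^{n+1}, D = diag(λ). If a ∉ (-1/2, 0), then ∫_{(0,∞)^{n+1}} (∏ᵢ λᵢ^{1/2}) det(KᵀK + σ²D)^{-1/2} exp(-½ yᵀ(σ²I + KD⁻¹Kᵀ)⁻¹ y) ∏ᵢ λᵢ^{a-1} dλ = ∞. -/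
/-!
Write `D = diagonal l`. Since `KᵀK ≤ e_max I` in the Loewner order,
`det (KᵀK + σ² D) ≤ ∏ᵢ (e_max + σ² lᵢ)`, and since `K D⁻¹ Kᵀ` is positive semidefinite the
quadratic form in the exponent is at most `‖y‖² / σ²`. Hence the integrand dominates
`exp (-‖y‖² / (2σ²)) ∏ᵢ g (lᵢ)` with `g t = t^(a - 1/2) (e_max + σ² t)^(-1/2)`, whose integral over
the orthant is the `(n+1)`-st power of `∫₀^∞ g`. That one-dimensional integral diverges at `0`
(where `g t ≳ t^(a - 1/2)`) when `a ≤ -1/2`, and at `∞` (where `g t ≳ t^(a - 1)`) when `a ≥ 0`.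
-/

open Matrix MeasureTheory Set
open scoped ENNReal

namespace Matrix

variable {ι : Type*} [Fintype ι] [DecidableEq ι]

theorem posSemidef_smul_one_sub_iff {A : Matrix ι ι ℝ} (hA : A.IsHermitian) {e : ℝ} :
    (e • (1 : Matrix ι ι ℝ) - A).PosSemidef ↔ ∀ μ ∈ spectrum ℝ A, μ ≤ e := by
  rw [posSemidef_iff_isHermitian_and_spectrum_nonneg, ← Algebra.algebraMap_eq_smul_one,
    ← spectrum.singleton_sub_eq]
  simp only [Set.singleton_sub, Set.image_subset_iff, Set.preimage_ofPred_eq, sub_nonneg]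
  refine ⟨fun h => h.2, fun h => ⟨?_, h⟩⟩
  rw [Algebra.algebraMap_eq_smul_one]
  exact (isHermitian_one.smul (IsSelfAdjoint.all e)).sub hA

theorem PosSemidef.det_le_one {N : Matrix ι ι ℝ} (hN : N.PosSemidef)
    (h : (1 - N).PosSemidef) : N.det ≤ 1 := by
  rw [← one_smul ℝ (1 : Matrix ι ι ℝ), posSemidef_smul_one_sub_iff hN.isHermitian] at h
  rw [hN.isHermitian.det_eq_prod_eigenvalues]
  exact Finset.prod_le_one (fun i _ => hN.eigenvalues_nonneg i)
    fun i _ => h _ (hN.isHermitian.eigenvalues_mem_spectrum_real i)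

theorem PosSemidef.det_le_prod_of_le_diagonal {A : Matrix ι ι ℝ} (hA : A.PosSemidef)
    {d : ι → ℝ} (hd : ∀ i, 0 < d i) (h : (diagonal d - A).PosSemidef) :
    A.det ≤ ∏ i, d i := by
  -- Conjugating by `diagonal d ^ (-1/2)` reduces to the case `diagonal d = 1`.
  set C : Matrix ι ι ℝ := diagonal fun i => (√(d i))⁻¹
  have hCC : C * diagonal d * Cᴴ = 1 := by
    simp only [C, diagonal_conjTranspose, star_trivial, diagonal_mul_diagonal, ← diagonal_one]
    congr 1
    funext i
    field_simp
    rw [Real.sq_sqrt (hd i).le, div_self (hd i).ne']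
  have hN := hA.mul_mul_conjTranspose_same C
  have h1N := h.mul_mul_conjTranspose_same C
  rw [Matrix.mul_sub, Matrix.sub_mul, hCC] at h1N
  have hdetCC := congrArg det hCC
  rw [det_mul, det_mul, det_one] at hdetCC
  calc A.det = (C * A * Cᴴ).det * (diagonal d).det := by
        rw [det_mul, det_mul]
        linear_combination (-A.det) * hdetCC
    _ ≤ 1 * ∏ i, d i := by
        rw [det_diagonal]
        gcongr
        · exact (Finset.prod_pos fun i _ => hd i).le
        · exact hN.det_le_one h1N
    _ = ∏ i, d i := one_mul _

theorem dotProduct_smul_one_add_inv_mulVec_le {σ : ℝ} (hσ : 0 < σ) {P : Matrix ι ι ℝ}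
    (hP : P.PosSemidef) (y : ι → ℝ) :
    y ⬝ᵥ ((σ • (1 : Matrix ι ι ℝ) + P)⁻¹ *ᵥ y) ≤ σ⁻¹ * (y ⬝ᵥ y) := by
  set M := σ • (1 : Matrix ι ι ℝ) + P
  have hM : IsUnit M.det := by
    have h1 : (σ • (1 : Matrix ι ι ℝ)).PosDef := by
      rw [smul_one_eq_diagonal]
      exact posDef_diagonal_iff.mpr fun _ => hσ
    exact (h1.add_posSemidef hP).det_pos.ne'.isUnit
  set x := M⁻¹ *ᵥ y
  have hy : y = σ • x + P *ᵥ x := by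
    have hMx : M *ᵥ x = y := by rw [mulVec_mulVec, mul_nonsing_inv _ hM, one_mulVec]
    rw [← hMx, add_mulVec, smul_mulVec, one_mulVec]
  have hxPx : 0 ≤ x ⬝ᵥ (P *ᵥ x) := by simpa using hP.dotProduct_mulVec_nonneg x
  have hPx : 0 ≤ (P *ᵥ x) ⬝ᵥ (P *ᵥ x) := by simpa using dotProduct_star_self_nonneg (P *ᵥ x)
  -- With `y = σ x + P x`, the gap `σ⁻¹ ‖y‖² - y ⬝ᵥ x` equals `x ⬝ᵥ P x + σ⁻¹ ‖P x‖²`.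
  rw [hy]
  simp only [add_dotProduct, dotProduct_add, smul_dotProduct, dotProduct_smul, smul_eq_mul,
    dotProduct_comm (P *ᵥ x) x]
  have hc : 0 ≤ σ⁻¹ * ((P *ᵥ x) ⬝ᵥ (P *ᵥ x)) := by positivity
  calc _ ≤ σ * (x ⬝ᵥ x) + x ⬝ᵥ (P *ᵥ x) + (x ⬝ᵥ (P *ᵥ x) + σ⁻¹ * ((P *ᵥ x) ⬝ᵥ (P *ᵥ x))) := by
        linarith
    _ = _ := by field_simp

theorem PosSemidef.det_add_diagonal_le_prod {G : Matrix ι ι ℝ} (hG : G.PosSemidef) {e : ℝ}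
    (he : ∀ μ ∈ spectrum ℝ G, μ ≤ e) {d : ι → ℝ} (hd : ∀ i, 0 ≤ d i) (hed : ∀ i, 0 < e + d i) :
    (G + diagonal d).det ≤ ∏ i, (e + d i) := by
  refine (hG.add (posSemidef_diagonal_iff.2 hd)).det_le_prod_of_le_diagonal hed ?_
  have hsub : diagonal (fun i => e + d i) - (G + diagonal d) = e • (1 : Matrix ι ι ℝ) - G := by
    rw [smul_one_eq_diagonal, ← diagonal_add, add_sub_add_right_eq_sub]
  rw [hsub]
  exact (posSemidef_smul_one_sub_iff hG.isHermitian).2 he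

end Matrix

section Integrand

variable {ι κ : Type*} [Fintype ι] [Fintype κ] [DecidableEq ι] [DecidableEq κ]

noncomputable def rvmIntegrand (y : κ → ℝ) (σ2 : ℝ) (K : Matrix κ ι ℝ) (a : ℝ) (l : ι → ℝ) : ℝ :=
  (∏ i, (l i) ^ ((1:ℝ)/2)) *
    ((Kᵀ * K + σ2 • Matrix.diagonal l).det) ^ (-(1/2) : ℝ) *
    Real.exp (-(1/2) * (y ⬝ᵥ ((σ2 • (1 : Matrix κ κ ℝ) + K * (Matrix.diagonal l)⁻¹ * Kᵀ)⁻¹ *ᵥ y))) *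
    ∏ i, (l i) ^ (a - 1)

theorem exp_mul_prod_le_rvmIntegrand (y : κ → ℝ) {σ2 : ℝ} (hσ : 0 < σ2) (K : Matrix κ ι ℝ)
    {emax : ℝ} (hemax : ∀ μ ∈ spectrum ℝ (Kᵀ * K), μ ≤ emax) (hemax' : 0 < emax) (a : ℝ)
    {l : ι → ℝ} (hl : ∀ i, 0 < l i) :
    Real.exp (-(1/2) * (σ2⁻¹ * (y ⬝ᵥ y))) *
        ∏ i, ((l i) ^ ((1:ℝ)/2) * (emax + σ2 * l i) ^ (-(1/2) : ℝ) * (l i) ^ (a - 1))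
      ≤ rvmIntegrand y σ2 K a l := by
  have hKK : (Kᵀ * K).PosSemidef := by
    simpa using posSemidef_conjTranspose_mul_self K
  have hd : ∀ i, 0 < emax + σ2 * l i := fun i => by have := hl i; positivity
  have hdet : (Kᵀ * K + σ2 • diagonal l).det ≤ ∏ i, (emax + σ2 * l i) := by
    rw [← diagonal_smul]
    exact hKK.det_add_diagonal_le_prod hemax (fun i => (mul_pos hσ (hl i)).le) hd
  have hdet_pos : 0 < (Kᵀ * K + σ2 • diagonal l).det := by
    rw [← diagonal_smul]
    exact (PosDef.posSemidef_add hKK (posDef_diagonal_iff.2 fun i => mul_pos hσ (hl i))).det_pos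
  have hdet_rpow : ∏ i, (emax + σ2 * l i) ^ (-(1/2) : ℝ)
      ≤ (Kᵀ * K + σ2 • diagonal l).det ^ (-(1/2) : ℝ) := by
    rw [Real.finsetProd_rpow _ _ fun i _ => (hd i).le]
    exact Real.rpow_le_rpow_of_nonpos hdet_pos hdet (by norm_num)
  have hP : (K * (diagonal l)⁻¹ * Kᵀ).PosSemidef := by
    simpa using (posSemidef_diagonal_iff.2 fun i => (hl i).le).inv.mul_mul_conjTranspose_same K
  have hexp : Real.exp (-(1/2) * (σ2⁻¹ * (y ⬝ᵥ y)))
      ≤ Real.exp (-(1/2) *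
          (y ⬝ᵥ ((σ2 • (1 : Matrix κ κ ℝ) + K * (diagonal l)⁻¹ * Kᵀ)⁻¹ *ᵥ y))) := by
    have := dotProduct_smul_one_add_inv_mulVec_le hσ hP y
    rw [Real.exp_le_exp]
    linarith
  rw [Finset.prod_mul_distrib, Finset.prod_mul_distrib, rvmIntegrand]
  calc _ = (∏ i, l i ^ ((1:ℝ)/2)) *
          ((∏ i, (emax + σ2 * l i) ^ (-(1/2) : ℝ)) * Real.exp (-(1/2) * (σ2⁻¹ * (y ⬝ᵥ y)))) *
          ∏ i, l i ^ (a - 1) := by ring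
    _ ≤ _ := by
      have : 0 ≤ ∏ i, l i ^ ((1:ℝ)/2) := Finset.prod_nonneg fun i _ => Real.rpow_nonneg (hl i).le _
      have : 0 ≤ ∏ i, l i ^ (a - 1) := Finset.prod_nonneg fun i _ => Real.rpow_nonneg (hl i).le _
      rw [mul_assoc _ (_ ^ _)]
      gcongr

end Integrand

theorem lintegral_fin_nat_prod_eq_prod {n : ℕ} {E : Type*} [MeasurableSpace E]
    {μ : Fin n → Measure E} [∀ i, SigmaFinite (μ i)]
    {f : Fin n → E → ℝ≥0∞} (hf : ∀ i, Measurable (f i)) :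
    ∫⁻ x : Fin n → E, ∏ i, f i (x i) ∂(Measure.pi μ) = ∏ i, ∫⁻ x, f i x ∂(μ i) := by
  induction n with
  | zero => simp
  | succ n ih =>
      calc
        _ = ∫⁻ x : E × (Fin n → E), f 0 x.1 * ∏ i : Fin n, f i.succ (x.2 i)
            ∂((μ 0).prod (Measure.pi (fun i ↦ μ i.succ))) := by
          rw [← ((measurePreserving_piFinSuccAbove μ 0).symm).lintegral_comp_emb
            (MeasurableEquiv.measurableEmbedding _)]
          simp_rw [MeasurableEquiv.piFinSuccAbove_symm_apply, Fin.insertNthEquiv,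
            Fin.prod_univ_succ, Fin.insertNth_zero, Equiv.coe_fn_mk, Fin.cons_succ,
            Fin.zero_succAbove, cast_eq, Fin.cons_zero]
        _ = (∫⁻ x, f 0 x ∂μ 0) * ∏ i : Fin n, ∫⁻ x, f i.succ x ∂(μ i.succ) := by
          rw [← ih (fun i => hf i.succ), ← lintegral_prod_mul (hf 0).aemeasurable]
          exact (Finset.measurable_prod _ fun i _ =>
            (hf i.succ).comp (measurable_pi_apply i)).aemeasurable
        _ = ∏ i, ∫⁻ x, f i x ∂(μ i) := by rw [Fin.prod_univ_succ]

theorem setLIntegral_univ_pi_prod_ofReal_eq_top {n : ℕ} {s : Set ℝ} {g : ℝ → ℝ}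
    (hg : Measurable g) (h : ∫⁻ t in s, ENNReal.ofReal (g t) = ⊤) :
    ∫⁻ l in univ.pi (fun _ : Fin (n+1) => s), ∏ i, ENNReal.ofReal (g (l i)) = ⊤ := by
  rw [volume_pi, Measure.restrict_pi_pi,
    lintegral_fin_nat_prod_eq_prod (f := fun _ t => ENNReal.ofReal (g t))
      fun _ => hg.ennreal_ofReal,
    Finset.prod_const, h, ENNReal.top_pow (by simp)]

theorem setLIntegral_ofReal_rpow_eq_top {s : Set ℝ} (hs : MeasurableSet s) (hs0 : s ⊆ Ioi 0)
    {r : ℝ} (h : ¬ IntegrableOn (fun t => t ^ r) s) : ∫⁻ t in s, ENNReal.ofReal (t ^ r) = ⊤ := by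
  contrapose! h
  refine (lintegral_ofReal_ne_top_iff_integrable (by fun_prop) ?_).1 h
  exact ae_restrict_of_forall_mem hs fun t ht => Real.rpow_nonneg (hs0 ht).le r

theorem setLIntegral_ofReal_eq_top_of_rpow_le {f : ℝ → ℝ} {s t : Set ℝ} (hs : MeasurableSet s)
    (hst : s ⊆ t) (hs0 : s ⊆ Ioi 0) {c r : ℝ} (hc : 0 < c)
    (hr : ¬ IntegrableOn (fun t => t ^ r) s) (hf : ∀ x ∈ s, c * x ^ r ≤ f x) :
    ∫⁻ x in t, ENNReal.ofReal (f x) = ⊤ := by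
  refine top_le_iff.1 ?_
  calc ⊤ = ENNReal.ofReal c * ∫⁻ x in s, ENNReal.ofReal (x ^ r) := by
        rw [setLIntegral_ofReal_rpow_eq_top hs hs0 hr, ENNReal.mul_top (by simpa using hc)]
    _ = ∫⁻ x in s, ENNReal.ofReal (c * x ^ r) := by
        rw [← lintegral_const_mul' _ _ ENNReal.ofReal_ne_top]
        refine setLIntegral_congr_fun hs fun x hx => ?_
        rw [ENNReal.ofReal_mul hc.le]
    _ ≤ ∫⁻ x in s, ENNReal.ofReal (f x) := setLIntegral_mono' hs fun x hx =>
        ENNReal.ofReal_le_ofReal (hf x hx)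
    _ ≤ ∫⁻ x in t, ENNReal.ofReal (f x) := lintegral_mono_set hst

theorem lintegral_Ioi_rpow_mul_rpow_eq_top {e σ a : ℝ} (he : 0 < e) (hσ : 0 < σ)
    (ha : a ∉ Ioo (-1/2) 0) :
    ∫⁻ t in Ioi 0, ENNReal.ofReal (t ^ ((1:ℝ)/2) * (e + σ * t) ^ (-(1/2) : ℝ) * t ^ (a - 1))
      = ⊤ := by
  have hc : 0 < (e + σ) ^ (-(1/2) : ℝ) := by positivity
  rcases lt_or_ge a 0 with hneg | hpos
  · have ha' : a ≤ -1/2 := by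
      by_contra! h
      exact ha ⟨h, hneg⟩
    refine setLIntegral_ofReal_eq_top_of_rpow_le (s := Ioo 0 1) (r := a - 1/2) measurableSet_Ioo
      Ioo_subset_Ioi_self Ioo_subset_Ioi_self hc ?_ fun t ht => ?_
    · rw [intervalIntegral.integrableOn_Ioo_rpow_iff one_pos]
      linarith
    · have ht0 : 0 < t := ht.1
      have hle : (e + σ) ^ (-(1/2) : ℝ) ≤ (e + σ * t) ^ (-(1/2) : ℝ) :=
        Real.rpow_le_rpow_of_nonpos (by positivity) (by nlinarith [ht.2]) (by norm_num)
      calc (e + σ) ^ (-(1/2) : ℝ) * t ^ (a - 1/2)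
          = (e + σ) ^ (-(1/2) : ℝ) * (t ^ ((1:ℝ)/2) * t ^ (a - 1)) := by
            rw [← Real.rpow_add ht0]; ring_nf
        _ ≤ _ := by
            rw [mul_left_comm, ← mul_assoc]
            gcongr
  · refine setLIntegral_ofReal_eq_top_of_rpow_le (r := a - 1) measurableSet_Ioi
      (Ioi_subset_Ioi zero_le_one) (Ioi_subset_Ioi zero_le_one) hc ?_ fun t ht => ?_
    · rw [integrableOn_Ioi_rpow_iff one_pos]
      linarith
    · have ht0 : (0 : ℝ) < t := zero_lt_one.trans ht
      have hle : ((e + σ) * t) ^ (-(1/2) : ℝ) ≤ (e + σ * t) ^ (-(1/2) : ℝ) :=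
        Real.rpow_le_rpow_of_nonpos (by positivity) (by nlinarith [mem_Ioi.1 ht]) (by norm_num)
      calc (e + σ) ^ (-(1/2) : ℝ) * t ^ (a - 1)
          = t ^ ((1:ℝ)/2) * ((e + σ) * t) ^ (-(1/2) : ℝ) * t ^ (a - 1) := by
            rw [Real.mul_rpow (by positivity) ht0.le, mul_left_comm, ← Real.rpow_add ht0]
            norm_num
        _ ≤ _ := by gcongr

theorem stmt15 {n : ℕ} (y : Fin n → ℝ) (σ2 : ℝ) (hσ : 0 < σ2)
    (K : Matrix (Fin n) (Fin (n+1)) ℝ) (emax : ℝ)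
    (hemax : IsGreatest (spectrum ℝ (Kᵀ * K)) emax) (hemax' : 0 < emax)
    (a : ℝ) (ha : a ∉ Ioo (-1/2 : ℝ) 0) :
    (∫⁻ l in univ.pi (fun _ : Fin (n+1) => Ioi (0:ℝ)),
        ENNReal.ofReal ((∏ i, (l i) ^ ((1:ℝ)/2)) *
          ((Kᵀ * K + σ2 • Matrix.diagonal l).det) ^ (-(1/2) : ℝ) *
          Real.exp (-(1/2) * (y ⬝ᵥ
            ((σ2 • (1 : Matrix (Fin n) (Fin n) ℝ) + K * (Matrix.diagonal l)⁻¹ * Kᵀ)⁻¹ *ᵥ y))) *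
          ∏ i, (l i) ^ (a - 1))) = ⊤ := by
  set g : ℝ → ℝ := fun t => t ^ ((1:ℝ)/2) * (emax + σ2 * t) ^ (-(1/2) : ℝ) * t ^ (a - 1)
  set c := Real.exp (-(1/2) * (σ2⁻¹ * (y ⬝ᵥ y)))
  have hprod : ∫⁻ l in univ.pi (fun _ : Fin (n+1) => Ioi (0:ℝ)), ∏ i, ENNReal.ofReal (g (l i))
      = ⊤ :=
    setLIntegral_univ_pi_prod_ofReal_eq_top (by fun_prop)
      (lintegral_Ioi_rpow_mul_rpow_eq_top hemax' hσ ha)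
  refine top_le_iff.1 ?_
  calc ⊤ = ENNReal.ofReal c *
        ∫⁻ l in univ.pi (fun _ => Ioi 0), ∏ i, ENNReal.ofReal (g (l i)) := by
        rw [hprod, ENNReal.mul_top (by simpa using Real.exp_pos _)]
    _ = ∫⁻ l in univ.pi (fun _ => Ioi 0), ENNReal.ofReal (c * ∏ i, g (l i)) := by
        rw [← lintegral_const_mul' _ _ ENNReal.ofReal_ne_top]
        refine setLIntegral_congr_fun (MeasurableSet.univ_pi fun _ => measurableSet_Ioi)
          fun l hl => ?_
        have hl0 : ∀ i, 0 < l i := fun i => hl i (mem_univ i)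
        rw [ENNReal.ofReal_mul (Real.exp_pos _).le,
          ENNReal.ofReal_prod_of_nonneg fun i _ => by have := hl0 i; positivity]
    _ ≤ _ := setLIntegral_mono' (MeasurableSet.univ_pi fun _ => measurableSet_Ioi) fun l hl =>
        ENNReal.ofReal_le_ofReal <|
          exp_mul_prod_le_rvmIntegrand y hσ K (fun _ hμ => hemax.2 hμ) hemax' a
            fun i => hl i (mem_univ i)
end

section
/- Let z ∈ ℝⁿ, σ² > 0, K an n × (n+1) matrix with e_max the largest eigenvalue of KᵀK, e_max > 0, and D = diag(λ₀,…,λₙ), λᵢ > 0. Then ∫_{(0,∞)^{n+1}} (∏ᵢ λᵢ^{1/2}) det(KᵀK + D)^{-1/2} exp(-(1/(2σ²)) zᵀ(I + KD⁻¹Kᵀ)⁻¹ z) ∏ᵢ λᵢ⁻¹ dλ = ∞. -/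
open Matrix MeasureTheory Set

/-! On the tube where `l i₀ > 1` and every other coordinate lies in `[1, 2]`, the integrand is
bounded below by `c / l i₀`. Indeed `1 + K D⁻¹ Kᵀ ≥ 1`, so the quadratic form is at most
`z ⬝ᵥ z`. If `C` bounds the entries of `KᵀK`, the `j`-th column of `KᵀK + D` is bounded by
`(C + 1) l j`, and the Leibniz expansion gives `det (KᵀK + D) ≤ (card m)! (C + 1) ^ card m ∏ l j`,
which cancels `∏ (l j) ^ (1/2)`. The integral of `1 / l i₀` over the tube diverges
logarithmically. -/

namespace Matrix

variable {ι m : Type*} [Fintype ι] [Fintype m] [DecidableEq m]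

theorem det_le_factorial_mul_prod_of_abs_le {M : Matrix m m ℝ} {b : m → ℝ}
    (hb : ∀ i j, |M i j| ≤ b j) : M.det ≤ (Fintype.card m).factorial * ∏ j, b j :=
  calc M.det ≤ |∑ σ : Equiv.Perm m, Equiv.Perm.sign σ • ∏ j, M (σ j) j| := by
        rw [← det_apply]; exact le_abs_self _
    _ ≤ ∑ σ : Equiv.Perm m, |Equiv.Perm.sign σ • ∏ j, M (σ j) j| :=
        Finset.abs_sum_le_sum_abs _ _
    _ = ∑ σ : Equiv.Perm m, ∏ j, |M (σ j) j| := Finset.sum_congr rfl fun σ _ =>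
        (AbsoluteValue.abs.map_units_int_smul _ _).trans (Finset.abs_prod _ _)
    _ ≤ ∑ _σ : Equiv.Perm m, ∏ j, b j := by
        gcongr with σ _ j
        exact hb _ _
    _ = (Fintype.card m).factorial * ∏ j, b j := by simp [Fintype.card_perm]

theorem det_add_diagonal_le {M : Matrix m m ℝ} {C : ℝ} (hC : ∀ i j, |M i j| ≤ C)
    {l : m → ℝ} (hl : ∀ i, 1 ≤ l i) :
    (M + diagonal l).det ≤ (Fintype.card m).factorial * (C + 1) ^ Fintype.card m * ∏ i, l i := by
  have hb : ∀ i j, |(M + diagonal l) i j| ≤ (C + 1) * l j := by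
    intro i j
    have hdiag : |diagonal l i j| ≤ l j := by
      rcases eq_or_ne i j with rfl | hij
      · simp [abs_of_pos (zero_lt_one.trans_le (hl i))]
      · simpa [diagonal_apply_ne _ hij] using zero_le_one.trans (hl j)
    have hC0 : 0 ≤ C := (abs_nonneg _).trans (hC i j)
    calc |(M + diagonal l) i j| ≤ C + l j := (abs_add_le _ _).trans (add_le_add (hC i j) hdiag)
      _ ≤ (C + 1) * l j := by nlinarith [hl j]
  calc (M + diagonal l).det ≤ (Fintype.card m).factorial * ∏ j, (C + 1) * l j :=
        det_le_factorial_mul_prod_of_abs_le hb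
    _ = _ := by rw [Finset.prod_mul_distrib, Finset.prod_const, Finset.card_univ, mul_assoc]

theorem posDef_transpose_mul_self_add_diagonal (K : Matrix ι m ℝ) {l : m → ℝ}
    (hl : ∀ i, 0 < l i) : (Kᵀ * K + diagonal l).PosDef := by
  have hKK : (Kᵀ * K).PosSemidef := by simpa using posSemidef_conjTranspose_mul_self K
  exact PosDef.posSemidef_add hKK (posDef_diagonal_iff.2 hl)

theorem posSemidef_mul_diagonal_inv_mul_transpose (K : Matrix ι m ℝ) {l : m → ℝ}
    (hl : ∀ i, 0 < l i) : (K * (diagonal l)⁻¹ * Kᵀ).PosSemidef := by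
  simpa using (posDef_diagonal_iff.2 hl).inv.posSemidef.mul_mul_conjTranspose_same K

theorem dotProduct_inv_one_add_mulVec_le [DecidableEq ι] {B : Matrix ι ι ℝ} (hB : B.PosSemidef)
    (z : ι → ℝ) : z ⬝ᵥ ((1 + B)⁻¹ *ᵥ z) ≤ z ⬝ᵥ z := by
  set w := (1 + B)⁻¹ *ᵥ z with hw
  have hunit : IsUnit (1 + B).det := (PosDef.one.add_posSemidef hB).det_pos.ne'.isUnit
  have hz : (1 + B) *ᵥ w = z := by rw [hw, mulVec_mulVec, mul_nonsing_inv _ hunit, one_mulVec]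
  rw [add_mulVec, one_mulVec] at hz
  have hBw : 0 ≤ w ⬝ᵥ (B *ᵥ w) := hB.dotProduct_mulVec_nonneg w
  have hsq : 0 ≤ (B *ᵥ w) ⬝ᵥ (B *ᵥ w) := Finset.sum_nonneg fun i _ => mul_self_nonneg _
  rw [← hz]
  simp only [add_dotProduct, dotProduct_add, dotProduct_comm (B *ᵥ w) w]
  linarith

end Matrix

theorem MeasureTheory.lintegral_pi_comp_eval {ι : Type*} [Fintype ι] [DecidableEq ι]
    {α : ι → Type*} [∀ i, MeasurableSpace (α i)] (μ : ∀ i, Measure (α i))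
    [∀ i, SigmaFinite (μ i)] (i : ι) {f : α i → ENNReal} (hf : Measurable f) :
    ∫⁻ x, f (x i) ∂Measure.pi μ = (∏ j ∈ Finset.univ.erase i, μ j univ) * ∫⁻ y, f y ∂μ i := by
  rw [← lintegral_map hf (measurable_pi_apply i), Measure.pi_map_eval, lintegral_smul_measure,
    smul_eq_mul]

theorem lintegral_Ioi_one_ofReal_inv_eq_top : ∫⁻ x in Ioi (1 : ℝ), ENNReal.ofReal x⁻¹ = ⊤ := by
  by_contra h
  refine not_integrableOn_Ioi_inv (a := 1) ⟨measurable_inv.aestronglyMeasurable, ?_⟩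
  refine (hasFiniteIntegral_iff_ofReal ?_).2 (lt_top_iff_ne_top.2 h)
  filter_upwards [ae_restrict_mem measurableSet_Ioi] with x hx
  exact inv_nonneg.2 (zero_le_one.trans hx.le)

section Tube

variable {m : Type*} [DecidableEq m]

def tube (i₀ : m) : Set (m → ℝ) := univ.pi (Function.update (fun _ => Icc 1 2) i₀ (Ioi 1))

theorem one_le_of_mem_tube {i₀ : m} {l : m → ℝ} (hl : l ∈ tube i₀) (i : m) : 1 ≤ l i := by
  have := hl i (mem_univ i)
  rcases eq_or_ne i i₀ with rfl | hi
  · simp only [Function.update_self, mem_Ioi] at this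
    exact this.le
  · simp only [Function.update_of_ne hi, mem_Icc] at this
    exact this.1

theorem le_two_of_mem_tube {i₀ : m} {l : m → ℝ} (hl : l ∈ tube i₀) {i : m} (hi : i ≠ i₀) :
    l i ≤ 2 := by
  have := hl i (mem_univ i)
  rw [Function.update_of_ne hi] at this
  exact this.2

theorem tube_subset_pi_Ioi_zero (i₀ : m) : tube i₀ ⊆ univ.pi fun _ => Ioi 0 :=
  fun _ hl i _ => zero_lt_one.trans_le (one_le_of_mem_tube hl i)

theorem measurableSet_tube [Fintype m] (i₀ : m) : MeasurableSet (tube i₀) := by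
  refine MeasurableSet.univ_pi fun i => ?_
  rcases eq_or_ne i i₀ with rfl | hi
  · simp [measurableSet_Ioi]
  · simp [Function.update_of_ne hi, measurableSet_Icc]

theorem lintegral_tube_ofReal_inv_eq_top [Fintype m] (i₀ : m) :
    ∫⁻ l in tube i₀, ENNReal.ofReal (l i₀)⁻¹ = ⊤ := by
  rw [tube, volume_pi, Measure.restrict_pi_pi,
    lintegral_pi_comp_eval (α := fun _ => ℝ) _ i₀ measurable_inv.ennreal_ofReal]
  have hvol : ∀ j ∈ Finset.univ.erase i₀,
      (volume.restrict (Function.update (fun _ => Icc (1 : ℝ) 2) i₀ (Ioi 1) j)) univ = 1 := by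
    intro j hj
    simp [Function.update_of_ne (Finset.ne_of_mem_erase hj)]
    norm_num
  rw [Finset.prod_eq_one hvol, one_mul, Function.update_self, lintegral_Ioi_one_ofReal_inv_eq_top]

end Tube

section Integrand

variable {ι m : Type*} [Fintype ι] [DecidableEq ι] [Fintype m] [DecidableEq m]

noncomputable def jeffreysIntegrand (z : ι → ℝ) (σ2 : ℝ) (K : Matrix ι m ℝ) (l : m → ℝ) : ℝ :=
  (∏ i, (l i) ^ ((1:ℝ)/2)) * ((Kᵀ * K + diagonal l).det) ^ (-(1/2) : ℝ) *
    Real.exp (-(1/(2*σ2)) * (z ⬝ᵥ (((1 : Matrix ι ι ℝ) + K * (diagonal l)⁻¹ * Kᵀ)⁻¹ *ᵥ z))) *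
    ∏ i, (l i)⁻¹

omit [DecidableEq ι] in
theorem exists_pos_le_prod_rpow_mul_det_rpow (K : Matrix ι m ℝ) :
    ∃ a > 0, ∀ l : m → ℝ, (∀ i, 1 ≤ l i) →
      a ≤ (∏ i, (l i) ^ ((1:ℝ)/2)) * ((Kᵀ * K + diagonal l).det) ^ (-(1/2) : ℝ) := by
  set C := ∑ p : m × m, |(Kᵀ * K) p.1 p.2|
  have hC : ∀ i j, |(Kᵀ * K) i j| ≤ C := fun i j =>
    Finset.single_le_sum (f := fun p : m × m => |(Kᵀ * K) p.1 p.2|)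
      (fun _ _ => abs_nonneg _) (Finset.mem_univ (i, j))
  set A : ℝ := (Fintype.card m).factorial * (C + 1) ^ Fintype.card m
  have hA : 0 < A := by positivity
  refine ⟨A ^ (-(1/2) : ℝ), by positivity, fun l hl => ?_⟩
  have hl0 : ∀ i, 0 < l i := fun i => zero_lt_one.trans_le (hl i)
  set P := ∏ i, l i
  have hP : 0 < P := Finset.prod_pos fun i _ => hl0 i
  have hdet : 0 < (Kᵀ * K + diagonal l).det :=
    (posDef_transpose_mul_self_add_diagonal K hl0).det_pos
  have hdet_le : (Kᵀ * K + diagonal l).det ≤ A * P := det_add_diagonal_le hC hl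
  calc A ^ (-(1/2) : ℝ) = P ^ ((1:ℝ)/2) * (A * P) ^ (-(1/2) : ℝ) := by
        rw [Real.mul_rpow hA.le hP.le, mul_left_comm, ← Real.rpow_add hP]
        norm_num
    _ ≤ P ^ ((1:ℝ)/2) * (Kᵀ * K + diagonal l).det ^ (-(1/2) : ℝ) :=
        mul_le_mul_of_nonneg_left (Real.rpow_le_rpow_of_nonpos hdet hdet_le (by norm_num))
          (by positivity)
    _ = _ := by rw [Real.finsetProd_rpow _ _ fun i _ => (hl0 i).le]

theorem exists_pos_mul_inv_le_jeffreysIntegrand (z : ι → ℝ) {σ2 : ℝ} (hσ : 0 < σ2)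
    (K : Matrix ι m ℝ) (i₀ : m) :
    ∃ c > 0, ∀ l ∈ tube i₀, c * (l i₀)⁻¹ ≤ jeffreysIntegrand z σ2 K l := by
  obtain ⟨a, ha, hdet⟩ := exists_pos_le_prod_rpow_mul_det_rpow K
  set e := Real.exp (-(1/(2*σ2)) * (z ⬝ᵥ z))
  set t := ∏ _i ∈ Finset.univ.erase i₀, (2:ℝ)⁻¹
  refine ⟨a * e * t, by positivity, fun l hl => ?_⟩
  have hl0 : ∀ i, 0 < l i := fun i => zero_lt_one.trans_le (one_le_of_mem_tube hl i)
  have hexp : e ≤ Real.exp (-(1/(2*σ2)) * (z ⬝ᵥ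
      (((1 : Matrix ι ι ℝ) + K * (diagonal l)⁻¹ * Kᵀ)⁻¹ *ᵥ z))) :=
    Real.exp_le_exp.2 <| mul_le_mul_of_nonpos_left
      (dotProduct_inv_one_add_mulVec_le (posSemidef_mul_diagonal_inv_mul_transpose K hl0) z)
      (by simp only [neg_nonpos]; positivity)
  have hprod : t * (l i₀)⁻¹ ≤ ∏ i, (l i)⁻¹ := by
    rw [← Finset.mul_prod_erase _ _ (Finset.mem_univ i₀), mul_comm t]
    refine mul_le_mul_of_nonneg_left (Finset.prod_le_prod (fun _ _ => by norm_num) fun i hi => ?_)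
      (inv_nonneg.2 (hl0 i₀).le)
    exact inv_anti₀ (hl0 i) (le_two_of_mem_tube hl (Finset.ne_of_mem_erase hi))
  have hdet_l := hdet l (one_le_of_mem_tube hl)
  calc a * e * t * (l i₀)⁻¹ = a * e * (t * (l i₀)⁻¹) := by ring
    _ ≤ _ := mul_le_mul (mul_le_mul hdet_l hexp (by positivity) (ha.le.trans hdet_l)) hprod
      (mul_nonneg (by positivity) (inv_nonneg.2 (hl0 i₀).le))
      (mul_nonneg (ha.le.trans hdet_l) (Real.exp_pos _).le)

theorem lintegral_jeffreysIntegrand_eq_top [Nonempty m] (z : ι → ℝ) {σ2 : ℝ} (hσ : 0 < σ2)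
    (K : Matrix ι m ℝ) :
    ∫⁻ l in univ.pi fun _ => Ioi 0, ENNReal.ofReal (jeffreysIntegrand z σ2 K l) = ⊤ := by
  obtain ⟨i₀⟩ := ‹Nonempty m›
  obtain ⟨c, hc, hle⟩ := exists_pos_mul_inv_le_jeffreysIntegrand z hσ K i₀
  refine top_le_iff.1 ?_
  calc ⊤ = ENNReal.ofReal c * ∫⁻ l in tube i₀, ENNReal.ofReal (l i₀)⁻¹ := by
        rw [lintegral_tube_ofReal_inv_eq_top, ENNReal.mul_top (ENNReal.ofReal_pos.2 hc).ne']
    _ = ∫⁻ l in tube i₀, ENNReal.ofReal (c * (l i₀)⁻¹) := by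
        rw [← lintegral_const_mul' _ _ ENNReal.ofReal_ne_top]
        simp_rw [ENNReal.ofReal_mul hc.le]
    _ ≤ ∫⁻ l in tube i₀, ENNReal.ofReal (jeffreysIntegrand z σ2 K l) :=
        setLIntegral_mono' (measurableSet_tube i₀) fun l hl => ENNReal.ofReal_le_ofReal (hle l hl)
    _ ≤ _ := lintegral_mono_set (tube_subset_pi_Ioi_zero i₀)

end Integrand

theorem stmt18_general {n : ℕ} (z : Fin n → ℝ) (σ2 : ℝ) (hσ : 0 < σ2)
    (K : Matrix (Fin n) (Fin (n+1)) ℝ) :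
    (∫⁻ l in univ.pi (fun _ : Fin (n+1) => Ioi (0:ℝ)),
        ENNReal.ofReal ((∏ i, (l i) ^ ((1:ℝ)/2)) *
          ((Kᵀ * K + Matrix.diagonal l).det) ^ (-(1/2) : ℝ) *
          Real.exp (-(1/(2*σ2)) * (z ⬝ᵥ
            (((1 : Matrix (Fin n) (Fin n) ℝ) + K * (Matrix.diagonal l)⁻¹ * Kᵀ)⁻¹ *ᵥ z))) *
          ∏ i, (l i)⁻¹)) = ⊤ :=
  lintegral_jeffreysIntegrand_eq_top z hσ K

theorem stmt18 {n : ℕ} (z : Fin n → ℝ) (σ2 : ℝ) (hσ : 0 < σ2)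
    (K : Matrix (Fin n) (Fin (n+1)) ℝ) (emax : ℝ)
    (hemax : IsGreatest (spectrum ℝ (Kᵀ * K)) emax) (hemax' : 0 < emax) :
    (∫⁻ l in univ.pi (fun _ : Fin (n+1) => Ioi (0:ℝ)),
        ENNReal.ofReal ((∏ i, (l i) ^ ((1:ℝ)/2)) *
          ((Kᵀ * K + Matrix.diagonal l).det) ^ (-(1/2) : ℝ) *
          Real.exp (-(1/(2*σ2)) * (z ⬝ᵥ
            (((1 : Matrix (Fin n) (Fin n) ℝ) + K * (Matrix.diagonal l)⁻¹ * Kᵀ)⁻¹ *ᵥ z))) *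
          ∏ i, (l i)⁻¹)) = ⊤ :=
  stmt18_general z σ2 hσ K
end
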